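/- Let γ > 0, p > 5 and ω > γ²/4. Then E(φ_ω) > 0 if and only if ξ(ω,γ) < ξ₁(p), i.e., if and only if ω > ω₁(p,γ) := γ²/(4 ξ₁(p)²). -/

import Mathlib

open MeasureTheory Set
open scoped ENNReal

noncomputable section

/-- Inverse hyperbolic tangent. -/
def artanh (x : ℝ) : ℝ := Real.log ((1 + x) / (1 - x)) / 2

/-- Squared `L²` norm of `v`. -/
def l2Sq (v : ℝ → ℂ) : ℝ := ∫ x : ℝ, ‖v x‖ ^ 2

/-- Squared `L²` norm of the derivative of `v`. -/
def gradSq (v : ℝ → ℂ) : ℝ := ∫ x : ℝ, ‖deriv v x‖ ^ 2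

/-- `∫ |v|^(p+1)`, i.e. `‖v‖_{L^{p+1}}^{p+1}`. -/
def lpPow (p : ℝ) (v : ℝ → ℂ) : ℝ := ∫ x : ℝ, ‖v x‖ ^ (p + 1)

/-- `v ∈ H¹(ℝ)`, expressed via its continuous representative: `v` is square
integrable, absolutely continuous with a.e. derivative `deriv v`, which is
square integrable. -/
def MemH1 (v : ℝ → ℂ) : Prop :=
  Continuous v ∧ MemLp v 2 volume ∧ MemLp (deriv v) 2 volume ∧
    ∀ x : ℝ, v x = v 0 + ∫ t in (0:ℝ)..x, deriv v t

/-- The energy functional `E`. -/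
def En (γ p : ℝ) (v : ℝ → ℂ) : ℝ :=
  gradSq v / 2 - γ / 2 * ‖v 0‖ ^ 2 - lpPow p v / (p + 1)

/-- The Nehari functional `K_ω`. -/
def Kfun (γ p ω : ℝ) (v : ℝ → ℂ) : ℝ :=
  gradSq v + ω * l2Sq v - γ * ‖v 0‖ ^ 2 - lpPow p v

/-- The virial functional `P`. -/
def Pfun (γ p : ℝ) (v : ℝ → ℂ) : ℝ :=
  gradSq v - γ / 2 * ‖v 0‖ ^ 2 - (p - 1) / (2 * (p + 1)) * lpPow p v

/-- The action functional `S_ω`. -/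
def Sfun (γ p ω : ℝ) (v : ℝ → ℂ) : ℝ := En γ p v + ω / 2 * l2Sq v

/-- The minimal action `d(ω)` on the Nehari manifold. -/
def dInf (γ p ω : ℝ) : ℝ :=
  sInf {s : ℝ | ∃ v : ℝ → ℂ, MemH1 v ∧ v ≠ 0 ∧ Kfun γ p ω v = 0 ∧ s = Sfun γ p ω v}

/-- The explicit standing wave profile `φ_ω`. -/
def phi (γ p ω : ℝ) (x : ℝ) : ℝ :=
  ((p + 1) * ω / 2 *
      (1 / Real.cosh ((p - 1) * Real.sqrt ω / 2 * |x| + artanh (γ / (2 * Real.sqrt ω)))) ^ 2)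
    ^ (1 / (p - 1))

/-- `φ_ω` as a complex valued function. -/
def phiC (γ p ω : ℝ) : ℝ → ℂ := fun x => (phi γ p ω x : ℂ)

/-- The `L²`-invariant scaling `v^λ(x) = λ^{1/2} v(λ x)`. -/
def scale (l : ℝ) (v : ℝ → ℂ) : ℝ → ℂ := fun x => (Real.sqrt l : ℂ) * v (l * x)

/-- The set `𝓑_ω`. -/
def inB (γ p ω : ℝ) (v : ℝ → ℂ) : Prop :=
  MemH1 v ∧ 0 < En γ p v ∧ En γ p v < En γ p (phiC γ p ω) ∧
    l2Sq v = l2Sq (phiC γ p ω) ∧ Pfun γ p v < 0 ∧ Kfun γ p ω v < 0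

/-! Write `T = tanh (a|x| + b)`, so that `φ_ω = (M (1 - T²))^(1/(p-1))` and `T' = a (1 - T²)`.
The substitution `s = T` turns `φ(0)²`, `∫ φ^(p+1)` and (after one integration by parts)
`∫ |φ'|²` into expressions in `∫_ξ^1 (1 - s²)^α ds` and `ξ (1 - ξ²)^α`, `α = 2/(p-1)`, which
gives `E(φ_ω) = c F(ξ)` with `c > 0` and `F(t) = (1 - 2α) ∫_t^1 (1 - s²)^α ds - t (1 - t²)^α`.
As `F'(t) = 2 (1 - t²)^(α-1) (t² - (1 - α))`, `F` decreases on `[0, √(1-α)]` and increases on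
`[√(1-α), 1]` up to `F(1) = 0`; hence its zero `ξ₁ ∈ (0,1)` lies in the decreasing part and
`F > 0` on `[0, 1]` exactly to the left of `ξ₁`. -/

open Filter Topology Real

lemma Real.hasDerivAt_tanh (x : ℝ) : HasDerivAt tanh (1 - tanh x ^ 2) x := by
  have h := (hasDerivAt_sinh x).div (hasDerivAt_cosh x) (cosh_pos x).ne'
  rw [show sinh / cosh = tanh from funext fun y => (tanh_eq_sinh_div_cosh y).symm] at h
  refine h.congr_deriv ?_
  rw [tanh_eq_sinh_div_cosh]
  field_simp

lemma Real.strictMono_tanh : StrictMono tanh :=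
  strictMono_of_deriv_pos fun x => by
    rw [(hasDerivAt_tanh x).deriv]
    exact sub_pos.2 (tanh_sq_lt_one x)

lemma Real.tendsto_tanh_atTop : Tendsto tanh atTop (𝓝 1) := by
  refine tendsto_order.2 ⟨fun y hy => ?_, fun z hz => .of_forall fun x => (tanh_lt_one x).trans hz⟩
  have hc : max y 0 ∈ Ioo (-1 : ℝ) 1 := ⟨by linarith [le_max_right y 0], max_lt hy one_pos⟩
  filter_upwards [eventually_gt_atTop (Real.artanh (max y 0))] with x hx
  calc y ≤ max y 0 := le_max_left y 0
    _ = tanh (Real.artanh (max y 0)) := (tanh_artanh hc).symm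
    _ < tanh x := strictMono_tanh hx

lemma Real.one_div_cosh_sq (x : ℝ) : (1 / cosh x) ^ 2 = 1 - tanh x ^ 2 := by
  rw [tanh_eq_sinh_div_cosh]
  field_simp
  linarith [cosh_sq_sub_sinh_sq x]

lemma artanh_eq_real_artanh {x : ℝ} (hx : x ∈ Icc (-1 : ℝ) 1) : _root_.artanh x = Real.artanh x := by
  rw [Real.artanh_eq_half_log hx, _root_.artanh]
  ring

lemma hasDerivAt_tanh_affine (a b x : ℝ) :
    HasDerivAt (fun x => tanh (a * x + b)) (a * (1 - tanh (a * x + b) ^ 2)) x := by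
  have h := (hasDerivAt_tanh (a * x + b)).comp x (((hasDerivAt_id x).const_mul a).add_const b)
  exact h.congr_deriv (by ring)

lemma tendsto_tanh_affine_atTop {a : ℝ} (ha : 0 < a) (b : ℝ) :
    Tendsto (fun x => tanh (a * x + b)) atTop (𝓝 1) :=
  tendsto_tanh_atTop.comp (tendsto_atTop_add_const_right _ b (tendsto_id.const_mul_atTop ha))

section OneSubSqRpow

variable {α : ℝ}

lemma continuous_one_sub_sq_rpow (hα : 0 ≤ α) : Continuous fun s : ℝ => (1 - s ^ 2) ^ α :=
  (continuous_const.sub (continuous_pow 2)).rpow_const fun _ => Or.inr hα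

lemma hasDerivAt_mul_one_sub_sq_rpow (α : ℝ) {s : ℝ} (hs : s ^ 2 < 1) :
    HasDerivAt (fun s : ℝ => s * (1 - s ^ 2) ^ α)
      ((1 - s ^ 2) ^ α - 2 * α * s ^ 2 * (1 - s ^ 2) ^ (α - 1)) s := by
  have h := (hasDerivAt_id s).mul
    (((hasDerivAt_pow 2 s).const_sub 1).rpow_const (p := α) (Or.inl (sub_pos.2 hs).ne'))
  refine h.congr_deriv ?_
  simp only [id]
  ring

lemma hasDerivAt_integral_one_sub_sq_rpow (hα : 0 ≤ α) (c u : ℝ) :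
    HasDerivAt (fun u => ∫ s in c..u, (1 - s ^ 2) ^ α) ((1 - u ^ 2) ^ α) u :=
  ((continuous_one_sub_sq_rpow hα).integral_hasStrictDerivAt c u).hasDerivAt

lemma continuous_integral_one_sub_sq_rpow (hα : 0 ≤ α) (c : ℝ) :
    Continuous fun u => ∫ s in c..u, (1 - s ^ 2) ^ α :=
  continuous_iff_continuousAt.2 fun u => (hasDerivAt_integral_one_sub_sq_rpow hα c u).continuousAt

end OneSubSqRpow

section HalfLine

variable {a α : ℝ}

lemma hasDerivAt_integral_tanh_affine (hα : 0 ≤ α) (a b c x : ℝ) :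
    HasDerivAt (fun x => ∫ s in c..tanh (a * x + b), (1 - s ^ 2) ^ α)
      (a * (1 - tanh (a * x + b) ^ 2) ^ (α + 1)) x := by
  have h := (hasDerivAt_integral_one_sub_sq_rpow hα c _).comp x (hasDerivAt_tanh_affine a b x)
  refine h.congr_deriv ?_
  rw [rpow_add_one (sub_pos.2 (tanh_sq_lt_one _)).ne']
  ring

lemma integral_Ioi_one_sub_tanh_sq_rpow (ha : 0 < a) (hα : 0 ≤ α) (b : ℝ) :
    ∫ x in Ioi 0, (1 - tanh (a * x + b) ^ 2) ^ (α + 1) =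
      (∫ s in tanh b..1, (1 - s ^ 2) ^ α) / a := by
  have hderiv : ∀ x ∈ Ici (0 : ℝ),
      HasDerivAt (fun x => (∫ s in tanh b..tanh (a * x + b), (1 - s ^ 2) ^ α) / a)
        ((1 - tanh (a * x + b) ^ 2) ^ (α + 1)) x := fun x _ =>
    ((hasDerivAt_integral_tanh_affine hα a b (tanh b) x).div_const a).congr_deriv
      (by field_simp)
  have hlim : Tendsto (fun x => (∫ s in tanh b..tanh (a * x + b), (1 - s ^ 2) ^ α) / a) atTop
      (𝓝 ((∫ s in tanh b..1, (1 - s ^ 2) ^ α) / a)) :=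
    (((continuous_integral_one_sub_sq_rpow hα _).tendsto 1).comp
      (tendsto_tanh_affine_atTop ha b)).div_const a
  rw [integral_Ioi_of_hasDerivAt_of_nonneg' hderiv
    (fun x _ => rpow_nonneg (sub_pos.2 (tanh_sq_lt_one _)).le _) hlim]
  simp

lemma integral_Ioi_tanh_sq_mul_one_sub_tanh_sq_rpow (ha : 0 < a) (hα : 0 < α) (b : ℝ) :
    ∫ x in Ioi 0, tanh (a * x + b) ^ 2 * (1 - tanh (a * x + b) ^ 2) ^ α =
      ((∫ s in tanh b..1, (1 - s ^ 2) ^ α) + tanh b * (1 - tanh b ^ 2) ^ α) / (2 * α * a) := by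
  -- `G` comes from integrating `(t (1 - t²)^α)' = (1 - t²)^α - 2α t² (1 - t²)^(α - 1)` at `t = T`
  set G : ℝ → ℝ := fun x => ((∫ s in tanh b..tanh (a * x + b), (1 - s ^ 2) ^ α) -
    tanh (a * x + b) * (1 - tanh (a * x + b) ^ 2) ^ α) / (2 * α * a)
  have hderiv : ∀ x ∈ Ici (0 : ℝ),
      HasDerivAt G (tanh (a * x + b) ^ 2 * (1 - tanh (a * x + b) ^ 2) ^ α) x := by
    intro x _
    have hT := tanh_sq_lt_one (a * x + b)
    have h := ((hasDerivAt_integral_tanh_affine hα.le a b (tanh b) x).sub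
      ((hasDerivAt_mul_one_sub_sq_rpow α hT).comp x (hasDerivAt_tanh_affine a b x))).div_const
      (2 * α * a)
    refine h.congr_deriv ?_
    have hS : 1 - tanh (a * x + b) ^ 2 ≠ 0 := (sub_pos.2 hT).ne'
    rw [rpow_add_one hS, rpow_sub_one hS]
    field_simp
    ring
  have hlim : Tendsto G atTop (𝓝 (((∫ s in tanh b..1, (1 - s ^ 2) ^ α) -
      1 * (1 - 1 ^ 2) ^ α) / (2 * α * a))) :=
    ((((continuous_integral_one_sub_sq_rpow hα.le _).tendsto 1).sub
      ((continuous_id.mul (continuous_one_sub_sq_rpow hα.le)).tendsto 1)).comp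
      (tendsto_tanh_affine_atTop ha b)).div_const _
  rw [integral_Ioi_of_hasDerivAt_of_nonneg' hderiv
    (fun x _ => mul_nonneg (sq_nonneg _) (rpow_nonneg (sub_pos.2 (tanh_sq_lt_one _)).le _)) hlim]
  simp only [G, mul_zero, zero_add, intervalIntegral.integral_same, one_pow, sub_self,
    zero_rpow hα.ne', sub_zero, zero_sub]
  ring

end HalfLine

lemma mul_rpow_sq {M S : ℝ} (κ : ℝ) (hM : 0 ≤ M) (hS : 0 ≤ S) :
    ((M * S) ^ κ) ^ 2 = M ^ (2 * κ) * S ^ (2 * κ) := by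
  rw [← rpow_mul_natCast (mul_nonneg hM hS), mul_rpow hM hS, mul_comm κ]
  norm_num

def sechProfile (a b M κ : ℝ) (x : ℝ) : ℝ := (M * (1 - tanh (a * |x| + b) ^ 2)) ^ κ

section SechProfile

variable {a b M κ : ℝ}

lemma hasDerivAt_sech_sq_rpow (hM : 0 < M) (a b κ y : ℝ) :
    HasDerivAt (fun y => (M * (1 - tanh (a * y + b) ^ 2)) ^ κ)
      (-(2 * a * κ) * tanh (a * y + b) * (M * (1 - tanh (a * y + b) ^ 2)) ^ κ) y := by
  have hS : 0 < 1 - tanh (a * y + b) ^ 2 := sub_pos.2 (tanh_sq_lt_one _)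
  have hz : 0 < M * (1 - tanh (a * y + b) ^ 2) := mul_pos hM hS
  have h := ((((hasDerivAt_tanh_affine a b y).pow 2).const_sub 1).const_mul M).rpow_const
    (p := κ) (Or.inl hz.ne')
  refine h.congr_deriv ?_
  simp only [Pi.pow_apply]
  rw [rpow_sub_one hz.ne']
  field_simp [hS.ne']
  ring

lemma norm_deriv_sechProfile_sq (hM : 0 < M) {x : ℝ} (hx : x ≠ 0) :
    ‖deriv (fun x => (sechProfile a b M κ x : ℂ)) x‖ ^ 2 =
      4 * a ^ 2 * κ ^ 2 * M ^ (2 * κ) *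
        (tanh (a * |x| + b) ^ 2 * (1 - tanh (a * |x| + b) ^ 2) ^ (2 * κ)) := by
  have h := ((hasDerivAt_sech_sq_rpow hM a b κ |x|).comp x (hasDerivAt_abs hx)).ofReal_comp
  have hsign : (SignType.sign x : ℝ) ^ 2 = 1 := by
    rcases hx.lt_or_gt with h | h <;> simp [h]
  have hd : deriv (fun x => (sechProfile a b M κ x : ℂ)) x = _ := h.deriv
  rw [hd, Complex.norm_real, Real.norm_eq_abs, sq_abs, mul_pow, hsign,
    mul_pow, mul_rpow_sq κ hM.le (sub_pos.2 (tanh_sq_lt_one _)).le]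
  ring

lemma gradSq_sechProfile (ha : 0 < a) (hM : 0 < M) (hκ : 0 < κ) :
    gradSq (fun x => (sechProfile a b M κ x : ℂ)) =
      2 * a * κ * M ^ (2 * κ) * ((∫ s in tanh b..1, (1 - s ^ 2) ^ (2 * κ)) +
        tanh b * (1 - tanh b ^ 2) ^ (2 * κ)) := by
  have hae : (fun x => ‖deriv (fun x => (sechProfile a b M κ x : ℂ)) x‖ ^ 2) =ᵐ[volume]
      fun x => (fun y => 4 * a ^ 2 * κ ^ 2 * M ^ (2 * κ) *
        (tanh (a * y + b) ^ 2 * (1 - tanh (a * y + b) ^ 2) ^ (2 * κ))) |x| := by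
    filter_upwards [volume.ae_ne 0] with x hx using norm_deriv_sechProfile_sq hM hx
  rw [gradSq, integral_congr_ae hae, integral_comp_abs (f := fun y => 4 * a ^ 2 * κ ^ 2 *
      M ^ (2 * κ) * (tanh (a * y + b) ^ 2 * (1 - tanh (a * y + b) ^ 2) ^ (2 * κ))),
    integral_const_mul,
    integral_Ioi_tanh_sq_mul_one_sub_tanh_sq_rpow ha (by positivity)]
  field_simp
  ring

lemma lpPow_sechProfile (ha : 0 < a) (hM : 0 < M) (hκ : 0 < κ) {p : ℝ} (hκp : κ * (p - 1) = 1) :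
    lpPow p (fun x => (sechProfile a b M κ x : ℂ)) =
      2 * M ^ (2 * κ + 1) * (∫ s in tanh b..1, (1 - s ^ 2) ^ (2 * κ)) / a := by
  have hpt : ∀ x, ‖(sechProfile a b M κ x : ℂ)‖ ^ (p + 1) =
      M ^ (2 * κ + 1) * (1 - tanh (a * |x| + b) ^ 2) ^ (2 * κ + 1) := by
    intro x
    have hS := sub_pos.2 (tanh_sq_lt_one (a * |x| + b))
    rw [Complex.norm_real, sechProfile, norm_of_nonneg (rpow_nonneg (mul_pos hM hS).le _),
      ← rpow_mul (mul_pos hM hS).le, mul_rpow hM.le hS.le, show κ * (p + 1) = 2 * κ + 1 by linarith]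
  simp only [lpPow, hpt]
  rw [integral_comp_abs (f := fun y => M ^ (2 * κ + 1) * (1 - tanh (a * y + b) ^ 2) ^ (2 * κ + 1)),
    integral_const_mul, integral_Ioi_one_sub_tanh_sq_rpow ha (by positivity)]
  ring

lemma norm_sechProfile_zero_sq (hM : 0 < M) :
    ‖(sechProfile a b M κ 0 : ℂ)‖ ^ 2 = M ^ (2 * κ) * (1 - tanh b ^ 2) ^ (2 * κ) := by
  rw [Complex.norm_real, Real.norm_eq_abs, sq_abs, sechProfile, abs_zero, mul_zero, zero_add,
    mul_rpow_sq κ hM.le (sub_pos.2 (tanh_sq_lt_one _)).le]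

lemma En_sechProfile (ha : 0 < a) (hM : 0 < M) (hκ : 0 < κ) {γ p : ℝ} (hκp : κ * (p - 1) = 1) :
    En γ p (fun x => (sechProfile a b M κ x : ℂ)) =
      M ^ (2 * κ) * (a * κ * ((∫ s in tanh b..1, (1 - s ^ 2) ^ (2 * κ)) +
        tanh b * (1 - tanh b ^ 2) ^ (2 * κ)) - γ / 2 * (1 - tanh b ^ 2) ^ (2 * κ) -
        2 * M / (a * (p + 1)) * ∫ s in tanh b..1, (1 - s ^ 2) ^ (2 * κ)) := by
  have hp : p + 1 ≠ 0 := by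
    intro h
    nlinarith
  rw [En, gradSq_sechProfile ha hM hκ, lpPow_sechProfile ha hM hκ hκp, norm_sechProfile_zero_sq hM,
    rpow_add_one hM.ne']
  field_simp

end SechProfile

lemma pos_iff_lt_of_strictAntiOn_of_strictMonoOn {f : ℝ → ℝ} {a b τ z t : ℝ}
    (hanti : StrictAntiOn f (Icc a τ)) (hmono : StrictMonoOn f (Icc τ b)) (hb : f b = 0)
    (hz : z ∈ Ico a b) (hfz : f z = 0) (ht : t ∈ Icc a b) : 0 < f t ↔ t < z := by
  have hzτ : z < τ := by
    by_contra! h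
    have := hmono ⟨h, hz.2.le⟩ ⟨h.trans hz.2.le, le_rfl⟩ hz.2
    linarith
  constructor
  · intro hft
    by_contra! hzt
    rcases le_total t τ with htτ | hτt
    · have := (hanti.le_iff_ge ⟨ht.1, htτ⟩ ⟨hz.1, hzτ.le⟩).2 hzt
      linarith
    · have := (hmono.le_iff_le ⟨hτt, ht.2⟩ ⟨hτt.trans ht.2, le_rfl⟩).2 ht.2
      linarith
  · intro htz
    have := hanti ⟨ht.1, (htz.trans hzτ).le⟩ ⟨hz.1, hzτ.le⟩ htz
    linarith

def energyFactor (α t : ℝ) : ℝ :=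
  (1 - 2 * α) * (∫ s in t..1, (1 - s ^ 2) ^ α) - t * (1 - t ^ 2) ^ α

section EnergyFactor

variable {α : ℝ}

lemma continuous_energyFactor (hα : 0 ≤ α) : Continuous (energyFactor α) := by
  have hI : Continuous fun t => ∫ s in t..1, (1 - s ^ 2) ^ α := by
    simp only [intervalIntegral.integral_symm 1]
    exact (continuous_integral_one_sub_sq_rpow hα 1).neg
  exact (continuous_const.mul hI).sub (continuous_id.mul (continuous_one_sub_sq_rpow hα))

lemma hasDerivAt_energyFactor (hα : 0 < α) {t : ℝ} (ht : t ^ 2 < 1) :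
    HasDerivAt (energyFactor α) (2 * (1 - t ^ 2) ^ (α - 1) * (t ^ 2 - (1 - α))) t := by
  have hI : HasDerivAt (fun t => ∫ s in t..1, (1 - s ^ 2) ^ α) (-(1 - t ^ 2) ^ α) t := by
    simp only [intervalIntegral.integral_symm 1]
    exact (hasDerivAt_integral_one_sub_sq_rpow hα.le 1 t).neg
  refine ((hI.const_mul (1 - 2 * α)).sub (hasDerivAt_mul_one_sub_sq_rpow α ht)).congr_deriv ?_
  rw [← sub_add_cancel α 1, rpow_add_one (sub_pos.2 ht).ne', add_sub_cancel_right]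
  ring

lemma energyFactor_one (hα : 0 < α) : energyFactor α 1 = 0 := by
  simp [energyFactor, zero_rpow hα.ne']

lemma strictAntiOn_energyFactor (hα : 0 < α) :
    StrictAntiOn (energyFactor α) (Icc 0 √(1 - α)) := by
  refine strictAntiOn_of_deriv_neg (convex_Icc _ _) (continuous_energyFactor hα.le).continuousOn
    fun t ht => ?_
  rw [interior_Icc] at ht
  have ht2 : t ^ 2 < 1 - α := (lt_sqrt ht.1.le).1 ht.2
  rw [(hasDerivAt_energyFactor hα (by linarith)).deriv]
  have := rpow_pos_of_pos (show 0 < 1 - t ^ 2 by linarith) (α - 1)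
  nlinarith

lemma strictMonoOn_energyFactor (hα : 0 < α) :
    StrictMonoOn (energyFactor α) (Icc √(1 - α) 1) := by
  refine strictMonoOn_of_deriv_pos (convex_Icc _ _) (continuous_energyFactor hα.le).continuousOn
    fun t ht => ?_
  rw [interior_Icc] at ht
  have ht0 : 0 < t := (sqrt_nonneg _).trans_lt ht.1
  have ht2 : 1 - α < t ^ 2 := (sqrt_lt' ht0).1 ht.1
  have ht1 : t ^ 2 < 1 := by nlinarith [ht.2]
  rw [(hasDerivAt_energyFactor hα ht1).deriv]
  have := rpow_pos_of_pos (show 0 < 1 - t ^ 2 by linarith) (α - 1)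
  nlinarith

lemma energyFactor_pos_iff (hα : 0 < α) {z t : ℝ} (hz : z ∈ Ico 0 1) (hfz : energyFactor α z = 0)
    (ht : t ∈ Icc 0 1) : 0 < energyFactor α t ↔ t < z :=
  pos_iff_lt_of_strictAntiOn_of_strictMonoOn (strictAntiOn_energyFactor hα)
    (strictMonoOn_energyFactor hα) (energyFactor_one hα) hz hfz ht

end EnergyFactor

lemma phi_eq_sechProfile (γ p ω : ℝ) :
    phi γ p ω = sechProfile ((p - 1) * √ω / 2) (_root_.artanh (γ / (2 * √ω)))
      ((p + 1) * ω / 2) (1 / (p - 1)) := by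
  funext x
  rw [phi, sechProfile, one_div_cosh_sq]

lemma En_phiC {γ p ω : ℝ} (hp : 1 < p) (hω : 0 < ω) (hξ : γ / (2 * √ω) ∈ Ioo (-1) 1) :
    En γ p (phiC γ p ω) =
      ((p + 1) * ω / 2) ^ (2 / (p - 1)) * √ω / 2 * energyFactor (2 / (p - 1)) (γ / (2 * √ω)) := by
  have hs : 0 < √ω := sqrt_pos.2 hω
  have hp1 : 0 < p - 1 := sub_pos.2 hp
  have htanh : tanh (_root_.artanh (γ / (2 * √ω))) = γ / (2 * √ω) := by
    rw [artanh_eq_real_artanh (Ioo_subset_Icc_self hξ), tanh_artanh hξ]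
  rw [show phiC γ p ω = fun x => (phi γ p ω x : ℂ) from rfl, phi_eq_sechProfile,
    En_sechProfile (by positivity) (by positivity) (by positivity) (by field_simp), htanh,
    show 2 * (1 / (p - 1)) = 2 / (p - 1) by ring, energyFactor]
  set r := √ω
  rw [show ω = r ^ 2 from (sq_sqrt hω.le).symm]
  field_simp
  ring

/-- `E(φ_ω) > 0` iff `ξ(ω,γ) < ξ₁(p)` iff `ω > ω₁(p,γ)`. -/
theorem stmt15 (γ p ω : ℝ) (hγ : 0 < γ) (hp : 5 < p) (hω : γ ^ 2 / 4 < ω)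
    (ξ1 : ℝ) (hξ1 : ξ1 ∈ Ioo (0:ℝ) 1)
    (hξ1eq : (p - 5) / (p - 1) * ∫ s in ξ1..1, (1 - s ^ 2) ^ (2 / (p - 1)) =
      ξ1 * (1 - ξ1 ^ 2) ^ (2 / (p - 1))) :
    (0 < En γ p (phiC γ p ω) ↔ γ / (2 * Real.sqrt ω) < ξ1) ∧
    (γ / (2 * Real.sqrt ω) < ξ1 ↔ γ ^ 2 / (4 * ξ1 ^ 2) < ω) := by
  have hω0 : 0 < ω := (by positivity : 0 ≤ γ ^ 2 / 4).trans_lt hω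
  have hs : 0 < √ω := sqrt_pos.2 hω0
  have hp1 : 0 < p - 1 := by linarith
  have hξ : γ / (2 * √ω) < 1 := by
    have : γ / 2 < √ω := (lt_sqrt (by positivity)).2 (by linarith)
    rw [div_lt_one (by positivity)]
    linarith
  have hzero : energyFactor (2 / (p - 1)) ξ1 = 0 := by
    rw [energyFactor, show 1 - 2 * (2 / (p - 1)) = (p - 5) / (p - 1) by field_simp; ring, hξ1eq,
      sub_self]
  refine ⟨?_, ?_⟩
  · rw [En_phiC (by linarith) hω0 ⟨by linarith [show 0 < γ / (2 * √ω) by positivity], hξ⟩,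
      mul_pos_iff_of_pos_left (by positivity),
      energyFactor_pos_iff (by positivity) (Ioo_subset_Ico_self hξ1) hzero ⟨by positivity, hξ.le⟩]
  · have hξ10 : 0 < ξ1 := hξ1.1
    rw [div_lt_comm₀ (by positivity) hξ10, ← div_lt_iff₀' two_pos, lt_sqrt (by positivity),
      show (γ / ξ1 / 2) ^ 2 = γ ^ 2 / (4 * ξ1 ^ 2) by ring]
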